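/- Let g : ℝ^d → ℝ^d with |g|² integrable and g not almost everywhere zero, and suppose g is isotropic. Define C := ∫ g(q) g(q)ᵀ dq and D(x) := ∫ g(x − q) g(−q)ᵀ dq. Then for each x ≠ 0, both matrices C + D(x) and C − D(x) are positive definite. -/

import Mathlib

/-!
For `v ≠ 0` put `f := v ⬝ᵥ g`. After the substitution `q ↦ -q`, the quadratic forms of `C` and
`D(x)` at `v` are `∫ f²` and `∫ f(x + q) f(q)`, so by translation invariance
`v ⬝ᵥ (C ± D(x)) v = ½ ∫ (f(x + q) ± f(q))² ≥ 0`. Equality would force `f(x + q) = ∓ f(q)` for all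
`q`, making `f` continuous, square integrable and `2x`-periodic; near a point where `f ≠ 0` the
infinitely many disjoint translates of a small ball would then carry infinite mass, so `f = 0`.
Isotropy excludes `v ⬝ᵥ g ≡ 0` unless `g ≡ 0`, and, through `Q = -1`, makes `g` odd, which is what
makes `D(x)` symmetric.
-/

open Matrix MeasureTheory Metric

lemma pairwise_disjoint_ball_add_nsmul {E : Type*} [NormedAddCommGroup E] [NormedSpace ℝ E] (a : E)
    {y : E} {δ : ℝ} (hδ : δ + δ ≤ ‖y‖) :
    Pairwise (Function.onFun Disjoint fun n : ℕ => ball (a + n • y) δ) := by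
  intro n m hnm
  refine ball_disjoint_ball (hδ.trans ?_)
  have h1 : (1 : ℝ) ≤ |(n : ℝ) - m| := by
    have h : (1 : ℤ) ≤ |(n : ℤ) - m| := Int.one_le_abs (sub_ne_zero.mpr (by exact_mod_cast hnm))
    exact_mod_cast h
  calc ‖y‖ ≤ |(n : ℝ) - m| * ‖y‖ := le_mul_of_one_le_left (norm_nonneg y) h1
    _ = dist (a + n • y) (a + m • y) := by
      rw [dist_add_left, dist_eq_norm, ← Nat.cast_smul_eq_nsmul ℝ, ← Nat.cast_smul_eq_nsmul ℝ,
        ← sub_smul, norm_smul, Real.norm_eq_abs]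

section HaarMeasure

variable {E : Type*} [NormedAddCommGroup E] [NormedSpace ℝ E] [MeasurableSpace E] [BorelSpace E]
  {μ : Measure E} [μ.IsAddHaarMeasure]

lemma measure_eq_top_of_ball_subset_of_add_mem {S : Set E} {a y : E} {r : ℝ}
    (hr : 0 < r) (hy : y ≠ 0) (hball : ball a r ⊆ S) (hS : ∀ z ∈ S, z + y ∈ S) : μ S = ⊤ := by
  set δ := min r (‖y‖ / 2)
  have hδ : 0 < δ := lt_min hr (by positivity)
  have hS_nsmul : ∀ (n : ℕ), ∀ z ∈ S, z + n • y ∈ S := by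
    intro n
    induction n with
    | zero => simp
    | succ n ih => intro z hz; rw [succ_nsmul, ← add_assoc]; exact hS _ (ih z hz)
  have hsub : ∀ n : ℕ, ball (a + n • y) δ ⊆ S := by
    intro n z hz
    have hz' : z - n • y ∈ S := by
      refine hball (ball_subset_ball (min_le_left r (‖y‖ / 2)) ?_)
      rwa [mem_ball, dist_eq_norm, sub_sub, add_comm _ a, ← dist_eq_norm]
    simpa using hS_nsmul n _ hz'
  refine top_unique ?_
  calc (⊤ : ENNReal) = ∑' n : ℕ, μ (ball (a + n • y) δ) := by
        simp only [Measure.addHaar_ball_center μ _ δ]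
        exact (ENNReal.tsum_const_eq_top_of_ne_zero (measure_ball_pos μ 0 hδ).ne').symm
    _ = μ (⋃ n : ℕ, ball (a + n • y) δ) :=
        (measure_iUnion (pairwise_disjoint_ball_add_nsmul a
          (by linarith [min_le_right r (‖y‖ / 2)])) fun _ => measurableSet_ball).symm
    _ ≤ μ S := measure_mono (Set.iUnion_subset hsub)

theorem Function.Periodic.eq_zero_of_integrable {F : Type*} [NormedAddCommGroup F] {f : E → F}
    {y : E} (hper : Function.Periodic f y) (hy : y ≠ 0) (hf : Continuous f)
    (hint : Integrable f μ) : f = 0 := by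
  by_contra hne
  obtain ⟨a, ha⟩ := Function.ne_iff.mp hne
  have ha' : 0 < ‖f a‖ := norm_pos_iff.mpr ha
  have hc : 0 < ‖f a‖ / 2 := by positivity
  obtain ⟨r, hr, hball⟩ := Metric.mem_nhds_iff.mp
    (hf.norm.continuousAt.preimage_mem_nhds (Ioi_mem_nhds (half_lt_self ha')))
  have htop : μ {z | ‖f a‖ / 2 ≤ ‖f z‖} = ⊤ :=
    measure_eq_top_of_ball_subset_of_add_mem hr hy
      (fun z hz => le_of_lt (show ‖f a‖ / 2 < ‖f z‖ from hball hz))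
      (fun z hz => by simpa [hper z] using hz)
  exact (hint.measure_norm_ge_lt_top hc).ne htop

theorem abs_integral_mul_add_left_lt_integral_sq {f : E → ℝ} (hf : Continuous f)
    (hf2 : MemLp f 2 μ) (hne : f ≠ 0) {x : E} (hx : x ≠ 0) :
    |∫ q, f (x + q) * f q ∂μ| < ∫ q, f q ^ 2 ∂μ := by
  have hshift : MemLp (fun q => f (x + q)) 2 μ :=
    hf2.comp_measurePreserving (measurePreserving_add_left μ x)
  suffices h : ∀ ε : ℝ, ε * ε = 1 → 0 < ∫ q, f q ^ 2 ∂μ + ε * ∫ q, f (x + q) * f q ∂μ by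
    rw [abs_lt]
    constructor <;> linarith [h 1 (by norm_num), h (-1) (by norm_num)]
  intro ε hε
  set φ := fun q => f (x + q) + ε * f q
  have hφ : MemLp φ 2 μ := hshift.add (hf2.const_mul ε)
  have hexpand : ∫ q, φ q ^ 2 ∂μ = 2 * (∫ q, f q ^ 2 ∂μ + ε * ∫ q, f (x + q) * f q ∂μ) := by
    calc ∫ q, φ q ^ 2 ∂μ
        = ∫ q, (f (x + q) ^ 2 + (2 * ε) * (f (x + q) * f q)) + f q ^ 2 ∂μ := by
          congr 1 with q
          linear_combination f q ^ 2 * hε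
      _ = ∫ q, f (x + q) ^ 2 ∂μ + 2 * ε * ∫ q, f (x + q) * f q ∂μ + ∫ q, f q ^ 2 ∂μ := by
          have hprod : Integrable (fun q => f (x + q) * f q) μ := hshift.integrable_mul hf2
          rw [integral_add, integral_add, integral_const_mul]
          exacts [hshift.integrable_sq, hprod.const_mul _,
            hshift.integrable_sq.add (hprod.const_mul _), hf2.integrable_sq]
      _ = 2 * (∫ q, f q ^ 2 ∂μ + ε * ∫ q, f (x + q) * f q ∂μ) := by
          rw [integral_add_left_eq_self (fun q => f q ^ 2) x]
          ring
  have hφne : φ ≠ 0 := by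
    intro hφ0
    have hper : Function.Periodic f (x + x) := fun q => by
      have h : ∀ w, f (x + w) = -(ε * f w) := fun w =>
        eq_neg_of_add_eq_zero_left (congrFun hφ0 w)
      rw [add_comm, add_assoc, h, h]
      linear_combination f q * hε
    have hxx : x + x ≠ 0 := by
      rw [← two_smul ℝ x]
      exact smul_ne_zero two_ne_zero hx
    have hf0 := (hper.comp (· ^ 2)).eq_zero_of_integrable hxx ((continuous_pow 2).comp hf)
      hf2.integrable_sq
    exact hne (funext fun q => pow_eq_zero_iff two_ne_zero |>.mp (congrFun hf0 q))
  obtain ⟨q, hq⟩ := Function.ne_iff.mp hφne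
  have hpos : 0 < ∫ q, φ q ^ 2 ∂μ :=
    integral_pos_of_integrable_nonneg_nonzero (by fun_prop) hφ.integrable_sq
      (fun _ => sq_nonneg _) (pow_ne_zero 2 hq)
  linarith

end HaarMeasure

section Matrices

variable {ι : Type*}

lemma Matrix.isHermitian_of_integral_sub_mul_neg {E : Type*} [AddCommGroup E] [MeasurableSpace E]
    [MeasurableAdd E] [MeasurableNeg E] {μ : Measure E} [μ.IsNegInvariant] [μ.IsAddLeftInvariant]
    {g : E → ι → ℝ} (hodd : ∀ r, g (-r) = -g r) (x : E) :
    (of fun i j => ∫ q, g (x - q) i * g (-q) j ∂μ).IsHermitian := by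
  ext i j
  simp only [conjTranspose_apply, of_apply, star_trivial]
  rw [← integral_sub_left_eq_self _ μ x]
  congr 1 with q
  have hq : g q = -g (-q) := by rw [hodd, neg_neg]
  rw [sub_sub_cancel, neg_sub, ← neg_sub x q, hodd, hq, Pi.neg_apply, Pi.neg_apply]
  ring

variable [Fintype ι]

lemma Matrix.dotProduct_mulVec_of_integral {α : Type*} [MeasurableSpace α] {μ : Measure α}
    {G H : α → ι → ℝ} (hGH : ∀ i j, Integrable (fun q => G q i * H q j) μ) (v w : ι → ℝ) :
    v ⬝ᵥ (of fun i j => ∫ q, G q i * H q j ∂μ) *ᵥ w = ∫ q, (v ⬝ᵥ G q) * (w ⬝ᵥ H q) ∂μ := by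
  calc v ⬝ᵥ (of fun i j => ∫ q, G q i * H q j ∂μ) *ᵥ w
      = ∑ i, ∑ j, ∫ q, v i * w j * (G q i * H q j) ∂μ := by
        simp only [dotProduct, mulVec, of_apply, Finset.mul_sum, integral_const_mul]
        congr! 2 with i - j
        ring
    _ = ∫ q, ∑ i, ∑ j, v i * w j * (G q i * H q j) ∂μ := by
        rw [integral_finsetSum _ fun i _ => integrable_finsetSum _ fun j _ => (hGH i j).const_mul _]
        congr 1 with i
        rw [integral_finsetSum _ fun j _ => (hGH i j).const_mul _]
    _ = ∫ q, (v ⬝ᵥ G q) * (w ⬝ᵥ H q) ∂μ := by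
        congr 1 with q
        simp only [dotProduct, Finset.sum_mul_sum]
        congr! 2 with i - j
        ring

variable [DecidableEq ι]

-- the identity when `n = 0`, since then `2 / (n ⬝ᵥ n) = 0`
noncomputable def householder (n : ι → ℝ) : Matrix ι ι ℝ := 1 - (2 / (n ⬝ᵥ n)) • vecMulVec n n

lemma householder_mulVec (n w : ι → ℝ) :
    householder n *ᵥ w = w - (2 * (n ⬝ᵥ w) / (n ⬝ᵥ n)) • n := by
  simp [householder, sub_mulVec, smul_mulVec, vecMulVec_mulVec, smul_smul, div_mul_eq_mul_div]

lemma householder_mul_transpose (n : ι → ℝ) : householder n * (householder n)ᵀ = 1 := by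
  have hT : (householder n)ᵀ = householder n := by
    simp [householder, transpose_vecMulVec]
  rw [hT, householder]
  set c := 2 / (n ⬝ᵥ n)
  have hc : c * c * (n ⬝ᵥ n) = 2 * c := by
    rcases eq_or_ne (n ⬝ᵥ n) 0 with h | h
    · simp [c, h]
    · rw [mul_assoc, div_mul_cancel₀ _ h, mul_comm]
  rw [sub_mul, mul_sub, mul_sub, smul_mul_smul_comm, vecMulVec_mul_vecMulVec,
    vecMulVec_smul, smul_smul, hc]
  simp only [one_mul, mul_one]
  module

def IsIsotropic (g : (ι → ℝ) → ι → ℝ) : Prop :=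
  ∀ Q : Matrix ι ι ℝ, Q * Qᵀ = 1 → ∀ r, g (Q *ᵥ r) = Q *ᵥ g r

lemma IsIsotropic.neg {g : (ι → ℝ) → ι → ℝ} (hg : IsIsotropic g) (r : ι → ℝ) : g (-r) = -g r := by
  simpa [neg_mulVec] using hg (-1) (by simp) r

-- Apply the hypothesis at `R r`, `R` the reflection in `(v + g r)ᗮ`: `v ⬝ᵥ R (g r) = 0` reads
-- `‖v‖² ‖g r‖² = 0`.
lemma IsIsotropic.eq_zero_of_dotProduct_eq_zero {g : (ι → ℝ) → ι → ℝ} (hg : IsIsotropic g)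
    {v : ι → ℝ} (hv : v ≠ 0) (hvg : ∀ r, v ⬝ᵥ g r = 0) : g = 0 := by
  funext r
  have h := hvg (householder (v + g r) *ᵥ r)
  rw [hg _ (householder_mul_transpose _), householder_mulVec] at h
  simp only [dotProduct_sub, dotProduct_smul, add_dotProduct, dotProduct_add,
    dotProduct_comm (g r) v, hvg r, smul_eq_mul, zero_add, add_zero, zero_sub, neg_eq_zero] at h
  have hself_nonneg : ∀ w : ι → ℝ, 0 ≤ w ⬝ᵥ w := fun w => by
    simpa using dotProduct_self_star_nonneg w
  have hvv : v ⬝ᵥ v ≠ 0 := fun h0 => hv (dotProduct_self_eq_zero.mp h0)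
  have hsum : v ⬝ᵥ v + g r ⬝ᵥ g r ≠ 0 :=
    (add_pos_of_pos_of_nonneg ((hself_nonneg v).lt_of_ne' hvv) (hself_nonneg _)).ne'
  exact dotProduct_self_eq_zero.mp (by simpa [hvv, hsum] using h)

end Matrices

theorem stmt10_general {d : ℕ} (g : (Fin d → ℝ) → (Fin d → ℝ))
    (hg : Continuous g)
    (hiso : ∀ Q : Matrix (Fin d) (Fin d) ℝ, Q * Qᵀ = 1 →
      ∀ r, g (Q.mulVec r) = Q.mulVec (g r))
    (h2 : Integrable (fun q : Fin d → ℝ => ‖g q‖ ^ 2))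
    (hne : ¬ (∀ᵐ q : Fin d → ℝ, g q = 0))
    (x : Fin d → ℝ) (hx : x ≠ 0) :
    ((Matrix.of fun i j => ∫ q : Fin d → ℝ, g q i * g q j) +
      (Matrix.of fun i j => ∫ q : Fin d → ℝ, g (x - q) i * g (-q) j) :
        Matrix (Fin d) (Fin d) ℝ).PosDef ∧
    ((Matrix.of fun i j => ∫ q : Fin d → ℝ, g q i * g q j) -
      (Matrix.of fun i j => ∫ q : Fin d → ℝ, g (x - q) i * g (-q) j) :
        Matrix (Fin d) (Fin d) ℝ).PosDef := by
  set C : Matrix (Fin d) (Fin d) ℝ := of fun i j => ∫ q, g q i * g q j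
  set D : Matrix (Fin d) (Fin d) ℝ := of fun i j => ∫ q, g (x - q) i * g (-q) j
  have hgL2 : MemLp g 2 volume := (memLp_two_iff_integrable_sq_norm hg.aestronglyMeasurable).2 h2
  have hgsub : MemLp (fun q => g (x - q)) 2 volume := by
    simpa [Function.comp_def, sub_eq_add_neg] using hgL2.comp_measurePreserving
      ((measurePreserving_add_left volume x).comp (Measure.measurePreserving_neg volume))
  have hgneg : MemLp (fun q => g (-q)) 2 volume :=
    hgL2.comp_measurePreserving (Measure.measurePreserving_neg volume)
  have hC : C.IsHermitian := by
    ext i j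
    simp only [C, conjTranspose_apply, of_apply, star_trivial, mul_comm]
  have hD : D.IsHermitian := isHermitian_of_integral_sub_mul_neg (IsIsotropic.neg hiso) x
  have hform : ∀ v : Fin d → ℝ, v ≠ 0 → |v ⬝ᵥ D *ᵥ v| < v ⬝ᵥ C *ᵥ v := by
    intro v hv
    set f := fun q => v ⬝ᵥ g q
    have hf2 : MemLp f 2 volume := by
      simpa [f, dotProduct] using
        memLp_finsetSum Finset.univ fun i _ => (hgL2.eval i).const_mul (v i)
    have hf0 : f ≠ 0 := fun hf0 =>
      hne (Filter.Eventually.of_forall (congrFun (IsIsotropic.eq_zero_of_dotProduct_eq_zero hiso hv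
        (congrFun hf0))))
    rw [dotProduct_mulVec_of_integral (fun i j => (hgsub.eval i).integrable_mul (hgneg.eval j)),
      dotProduct_mulVec_of_integral (fun i j => (hgL2.eval i).integrable_mul (hgL2.eval j)),
      ← integral_neg_eq_self]
    simpa [f, sub_eq_add_neg, sq] using
      abs_integral_mul_add_left_lt_integral_sq (by fun_prop) hf2 hf0 hx
  refine ⟨posDef_iff_dotProduct_mulVec.2 ⟨hC.add hD, fun v hv => ?_⟩,
    posDef_iff_dotProduct_mulVec.2 ⟨hC.sub hD, fun v hv => ?_⟩⟩
  · simp only [star_trivial, add_mulVec, dotProduct_add]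
    linarith [neg_abs_le (v ⬝ᵥ D *ᵥ v), hform v hv]
  · simp only [star_trivial, sub_mulVec, dotProduct_sub]
    linarith [le_abs_self (v ⬝ᵥ D *ᵥ v), hform v hv]

theorem stmt10 {d : ℕ} (g : (Fin d → ℝ) → (Fin d → ℝ))
    (hg : Continuous g)
    (hiso : ∀ Q : Matrix (Fin d) (Fin d) ℝ, Q * Qᵀ = 1 →
      ∀ r, g (Q.mulVec r) = Q.mulVec (g r))
    (h1 : Integrable (fun q : Fin d → ℝ => ‖g q‖))
    (h2 : Integrable (fun q : Fin d → ℝ => ‖g q‖ ^ 2))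
    (hne : ¬ (∀ᵐ q : Fin d → ℝ, g q = 0))
    (x : Fin d → ℝ) (hx : x ≠ 0) :
    ((Matrix.of fun i j => ∫ q : Fin d → ℝ, g q i * g q j) +
      (Matrix.of fun i j => ∫ q : Fin d → ℝ, g (x - q) i * g (-q) j) :
        Matrix (Fin d) (Fin d) ℝ).PosDef ∧
    ((Matrix.of fun i j => ∫ q : Fin d → ℝ, g q i * g q j) -
      (Matrix.of fun i j => ∫ q : Fin d → ℝ, g (x - q) i * g (-q) j) :
        Matrix (Fin d) (Fin d) ℝ).PosDef :=
  stmt10_general g hg hiso h2 hne x hx
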